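/- Right extension lemma: let Φ₀ be a finite set of formulas closed under subformulas and under ∼. For any subsets u, v ⊆ Φ₀ and set of formulas w such that the pair (u,v) is w-consistent in ℜ_d, there exists a subset v' ⊆ Φ₀ with v ⊆ v' such that v' is consistent in ℜ_d, v' is complete (for every φ ∈ Φ₀, φ ∈ v' or ∼φ ∈ v'), and the pair (u,v') is w-consistent in ℜ_d. -/

import Mathlib

/-- Formulas of the modal language 𝓛: propositional variables, ⊥, →, and ▷. -/
inductive Formula : Type
  | var : ℕ → Formula
  | bot : Formula
  | imp : Formula → Formula → Formula
  | tri : Formula → Formula → Formula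
deriving DecidableEq

namespace Formula

/-- ¬φ := φ → ⊥ -/
def neg (φ : Formula) : Formula := imp φ bot
/-- ⊤ := ¬⊥ -/
def top : Formula := neg bot
/-- φ ∨ ψ := ¬φ → ψ -/
def disj (φ ψ : Formula) : Formula := imp (neg φ) ψ
/-- φ ∧ ψ := ¬(φ → ¬ψ) -/
def conj (φ ψ : Formula) : Formula := neg (imp φ (neg ψ))

/-- `φ` is a substitution instance of a classical propositional tautology:
it evaluates to `true` under every boolean valuation of formulas that
respects `⊥` and `→` (variables and `▷`-formulas are treated as atoms). -/
def IsPropTaut (φ : Formula) : Prop :=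
  ∀ v : Formula → Bool, v bot = false →
    (∀ a b, v (imp a b) = (!(v a) || v b)) → v φ = true

/-- Hilbert-style provability.  `Prv false` is the logic ℜ (axioms: classical
tautologies, A1, A2, A3; rules: Modus Ponens and monotonicity M);
`Prv true` is the logic ℜ_d, which additionally has axiom A4. -/
inductive Prv : Bool → Formula → Prop
  | taut {d : Bool} {φ} : IsPropTaut φ → Prv d φ
  | a1 {d : Bool} (φ ψ χ) : Prv d (imp (tri φ ψ) (imp (tri χ ψ) (tri (disj φ χ) ψ)))
  | a2 {d : Bool} (φ) : Prv d (tri bot φ)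
  | a3 {d : Bool} (φ) : Prv d (tri φ top)
  | a4 (φ ψ χ) : Prv true (imp (tri φ ψ) (imp (tri φ χ) (tri φ (conj ψ χ))))
  | mp {d : Bool} {φ ψ} : Prv d (imp φ ψ) → Prv d φ → Prv d ψ
  | mono {d : Bool} {φ₁ φ₂ ψ₁ ψ₂} : Prv d (imp φ₁ φ₂) → Prv d (imp ψ₁ ψ₂) →
      Prv d (imp (tri φ₂ ψ₁) (tri φ₁ ψ₂))

/-- `Deriv d Δ φ`: φ is derivable from the hypotheses Δ together with all
theorems of the logic (`Prv d`) using only Modus Ponens. -/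
inductive Deriv (d : Bool) (Δ : Set Formula) : Formula → Prop
  | hyp {φ} : φ ∈ Δ → Deriv d Δ φ
  | thm {φ} : Prv d φ → Deriv d Δ φ
  | mp {φ ψ} : Deriv d Δ (imp φ ψ) → Deriv d Δ φ → Deriv d Δ ψ

/-- Conjunction of a list of formulas (empty conjunction is ⊤). -/
def conjList : List Formula → Formula
  | [] => top
  | φ :: l => conj φ (conjList l)

/-- ⋀Γ : conjunction of all formulas of a finite set Γ (⋀∅ = ⊤). -/
noncomputable def bigConj (Γ : Finset Formula) : Formula := conjList Γ.toList

/-- A set of formulas is consistent if ⊥ is not derivable from it. -/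
def Consistent (d : Bool) (Δ : Set Formula) : Prop := ¬ Deriv d Δ bot

/-- The pair (u,v) is w-consistent: w ⊬ ⋀u ▷ ¬⋀v. -/
def WCons (d : Bool) (w : Set Formula) (u v : Finset Formula) : Prop :=
  ¬ Deriv d w (tri (bigConj u) (neg (bigConj v)))

/-- The operation ∼: ∼(¬φ) = φ, and ∼φ = ¬φ if φ is not a negation. -/
def simNeg : Formula → Formula
  | imp φ bot => φ
  | φ => neg φ

/-- Φ is closed under subformulas. -/
def SubClosed (Φ : Finset Formula) : Prop :=
  (∀ a b, imp a b ∈ Φ → a ∈ Φ ∧ b ∈ Φ) ∧ (∀ a b, tri a b ∈ Φ → a ∈ Φ ∧ b ∈ Φ)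

/-- Φ is closed under the operation ∼. -/
def SimClosed (Φ : Finset Formula) : Prop := ∀ φ ∈ Φ, simNeg φ ∈ Φ

/-- w is a maximal consistent subset of Φ: w ⊆ Φ, w is consistent, and for
every φ ∈ Φ either φ ∈ w or ∼φ ∈ w. -/
def MaxCons (d : Bool) (Φ : Finset Formula) (w : Finset Formula) : Prop :=
  w ⊆ Φ ∧ Consistent d ↑w ∧ ∀ φ ∈ Φ, φ ∈ w ∨ simNeg φ ∈ w

/-- Kripke forcing: `rel w u v` means u →_w v, `val w p` means w ⊩ p. -/
def Forces {W : Type*} (rel : W → W → W → Prop) (val : W → ℕ → Prop) :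
    W → Formula → Prop
  | w, var p => val w p
  | _, bot => False
  | w, imp a b => Forces rel val w a → Forces rel val w b
  | w, tri a b => ∀ u v, rel w u v → Forces rel val u a →
      ∃ v', rel w u v' ∧ Forces rel val v' b

end Formula

/-- A Kripke model: a finite set of worlds, a ternary computability relation,
and a forcing relation between worlds and propositional variables. -/
structure KripkeModel where
  W : Type
  fin : Finite W
  rel : W → W → W → Prop
  val : W → ℕ → Prop

/-- A Kripke model is deterministic if for all worlds w, u there is at most
one v with u →_w v. -/
def KripkeModel.Deterministic (M : KripkeModel) : Prop :=
  ∀ w u v v', M.rel w u v → M.rel w u v' → v = v'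

/-- Forcing in a Kripke model. -/
def KripkeModel.Forces (M : KripkeModel) : M.W → Formula → Prop :=
  Formula.Forces M.rel M.val

/-- The standard enumeration of nondeterministic partial recursive functions:
ζ_w(u) = the set of possible outputs of machine (code) w on input u. -/
def zeta (w u : ℕ) : Set ℕ :=
  {v | ((Denumerable.ofNat Nat.Partrec.Code w).eval (Nat.pair u v)).Dom}

/-- The standard enumeration of deterministic partial recursive functions:
ξ_w(u) = the value of the partial recursive function with code w on input u. -/
def xi (w u : ℕ) : Part ℕ :=
  (Denumerable.ofNat Nat.Partrec.Code w).eval u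

namespace Formula

/-- Set semantics for nondeterministic partial recursive functions
(existential reading of ▷). -/
def semN (val : ℕ → Set ℕ) : Formula → Set ℕ
  | var p => val p
  | bot => ∅
  | imp a b => (Set.univ \ semN val a) ∪ semN val b
  | tri a b => {w | ∀ u ∈ semN val a, zeta w u ≠ ∅ → zeta w u ∩ semN val b ≠ ∅}

/-- Set semantics for deterministic partial recursive functions. -/
def semD (val : ℕ → Set ℕ) : Formula → Set ℕ
  | var p => val p
  | bot => ∅
  | imp a b => (Set.univ \ semD val a) ∪ semD val b
  | tri a b => {w | ∀ u ∈ semD val a, ∀ h : (xi w u).Dom, (xi w u).get h ∈ semD val b}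

/-- Universal set semantics for nondeterministic partial recursive functions:
every terminating computation path from φ* ends in ψ*. -/
def semU (val : ℕ → Set ℕ) : Formula → Set ℕ
  | var p => val p
  | bot => ∅
  | imp a b => (Set.univ \ semU val a) ∪ semU val b
  | tri a b => {w | ∀ u ∈ semU val a, zeta w u ⊆ semU val b}

/-- A canonical injective encoding of formulas as natural numbers. -/
def enc : Formula → ℕ
  | var n => 4 * n
  | bot => 1
  | imp a b => 4 * Nat.pair (enc a) (enc b) + 2
  | tri a b => 4 * Nat.pair (enc a) (enc b) + 3

end Formula

/-!
Propositionally, formulas are Boolean combinations of atoms (variables and `▷`-formulas), and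
every propositional step is a tautology, checked on Boolean valuations. The set `v` is
extended by adding, for each `φ ∈ Φ₀` in turn, `φ` or `∼φ`: if both choices destroyed
`w`-consistency, A4 would merge `w ⊢ ⋀u ▷ ¬⋀(v ∪ {φ})` and `w ⊢ ⋀u ▷ ¬⋀(v ∪ {∼φ})` into
`w ⊢ ⋀u ▷ ¬⋀v`, because `∼φ` is classically `¬φ`. The result is consistent because an
inconsistent `v'` would give `⊢ ⊤ → ¬⋀v'`, whence `⋀u ▷ ¬⋀v'` from A3 and monotonicity.
-/

namespace Formula

def IsValuation (f : Formula → Bool) : Prop :=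
  f bot = false ∧ ∀ a b, f (imp a b) = (!f a || f b)

namespace IsValuation

variable {f : Formula → Bool}

lemma bot_eq_true (hf : IsValuation f) : f bot = true ↔ False := by
  simp [hf.1]

lemma imp_eq_true (hf : IsValuation f) (a b : Formula) :
    f (imp a b) = true ↔ (f a = true → f b = true) := by
  rw [hf.2]; cases f a <;> simp

lemma neg_eq_true (hf : IsValuation f) (a : Formula) : f (neg a) = true ↔ ¬f a = true := by
  simp [neg, hf.imp_eq_true, hf.bot_eq_true]

lemma top_eq_true (hf : IsValuation f) : f top = true := by
  simp [top, hf.neg_eq_true, hf.bot_eq_true]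

lemma conj_eq_true (hf : IsValuation f) (a b : Formula) :
    f (conj a b) = true ↔ f a = true ∧ f b = true := by
  simp [conj, hf.neg_eq_true, hf.imp_eq_true]

lemma simNeg_eq_true (hf : IsValuation f) (a : Formula) :
    f (simNeg a) = true ↔ ¬f a = true := by
  match a with
  | imp a bot => simp [simNeg, hf.imp_eq_true, hf.bot_eq_true]
  | var _ | bot | imp _ (var _) | imp _ (imp _ _) | imp _ (tri _ _) | tri _ _ =>
    exact hf.neg_eq_true _

lemma conjList_eq_true (hf : IsValuation f) :
    ∀ l : List Formula, f (conjList l) = true ↔ ∀ x ∈ l, f x = true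
  | [] => by simp [conjList, hf.top_eq_true]
  | a :: l => by simp [conjList, hf.conj_eq_true, hf.conjList_eq_true l]

lemma bigConj_eq_true (hf : IsValuation f) (s : Finset Formula) :
    f (bigConj s) = true ↔ ∀ x ∈ s, f x = true := by
  simp [bigConj, hf.conjList_eq_true]

end IsValuation

namespace Prv

variable {d : Bool}

lemma of_valid {a : Formula} (h : ∀ f, IsValuation f → f a = true) : Prv d a :=
  taut fun f hbot himp => h f ⟨hbot, himp⟩

lemma of_entails {a b : Formula} (ha : Prv d a)
    (h : ∀ f, IsValuation f → f a = true → f b = true) : Prv d b :=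
  mp (of_valid fun f hf => (hf.imp_eq_true _ _).2 (h f hf)) ha

lemma of_entails₂ {a b c : Formula} (ha : Prv d a) (hb : Prv d b)
    (h : ∀ f, IsValuation f → f a = true → f b = true → f c = true) : Prv d c :=
  mp (mp (of_valid fun f hf => by simpa only [hf.imp_eq_true] using h f hf) ha) hb

lemma imp_bigConj_of_deriv {s : Finset Formula} {ψ : Formula} (h : Deriv d ↑s ψ) :
    Prv d (imp (bigConj s) ψ) := by
  induction h with
  | hyp hψ =>
    exact of_valid fun f hf => by
      simpa only [hf.imp_eq_true, hf.bigConj_eq_true] using fun hs => hs _ hψ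
  | thm hψ => exact hψ.of_entails fun _ hf hψ => (hf.imp_eq_true _ _).2 fun _ => hψ
  | mp _ _ ih₁ ih₂ =>
    exact of_entails₂ ih₁ ih₂ fun f hf => by
      simpa only [hf.imp_eq_true] using fun h₁ h₂ hs => h₁ hs (h₂ hs)

end Prv

lemma Deriv.tri_mono_right {d : Bool} {Δ : Set Formula} {φ ψ₁ ψ₂ : Formula}
    (hψ : Prv d (imp ψ₁ ψ₂)) (h : Deriv d Δ (tri φ ψ₁)) : Deriv d Δ (tri φ ψ₂) :=
  mp (thm (Prv.mono (Prv.of_valid fun _ hf => (hf.imp_eq_true _ _).2 id) hψ)) h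

namespace WCons

variable {w : Set Formula} {u v : Finset Formula}

lemma consistent (h : WCons true w u v) : Consistent true ↑v := fun hv =>
  h <| Deriv.tri_mono_right
    ((Prv.imp_bigConj_of_deriv hv).of_entails fun f hf => by
      simpa only [hf.imp_eq_true, hf.neg_eq_true, hf.bot_eq_true] using fun h _ => h)
    (Deriv.thm (Prv.a3 _))

lemma insert_or_insert_simNeg (h : WCons true w u v) (φ : Formula) :
    WCons true w u (insert φ v) ∨ WCons true w u (insert (simNeg φ) v) := by
  by_contra! hc
  obtain ⟨hφ, hsφ⟩ : Deriv true w (tri (bigConj u) (neg (bigConj (insert φ v)))) ∧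
      Deriv true w (tri (bigConj u) (neg (bigConj (insert (simNeg φ) v)))) := by
    simpa [WCons] using hc
  refine h (Deriv.tri_mono_right ?_ (Deriv.mp (Deriv.mp (Deriv.thm (Prv.a4 _ _ _)) hφ) hsφ))
  refine Prv.of_valid fun f hf => ?_
  simp only [hf.imp_eq_true, hf.conj_eq_true, hf.neg_eq_true, hf.bigConj_eq_true,
    Finset.forall_mem_insert, hf.simNeg_eq_true]
  tauto

lemma exists_complete_superset (s : Finset Formula) (h : WCons true w u v) :
    ∃ v', v ⊆ v' ∧ v' ⊆ v ∪ s ∪ s.image simNeg ∧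
      (∀ φ ∈ s, φ ∈ v' ∨ simNeg φ ∈ v') ∧ WCons true w u v' := by
  induction s using Finset.induction_on generalizing v with
  | empty => exact ⟨v, subset_rfl, by simp, by simp, h⟩
  | insert φ s _ ih =>
    obtain ⟨ψ, hψ, hwψ⟩ : ∃ ψ, (ψ = φ ∨ ψ = simNeg φ) ∧ WCons true w u (insert ψ v) :=
      (h.insert_or_insert_simNeg φ).elim (fun h => ⟨φ, .inl rfl, h⟩) (fun h => ⟨_, .inr rfl, h⟩)
    obtain ⟨v', hvv', hv's, hcompl, hw⟩ := ih hwψ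
    refine ⟨v', (Finset.subset_insert ψ v).trans hvv', ?_, ?_, hw⟩
    · intro x hx
      have := hv's hx
      simp only [Finset.mem_union, Finset.mem_insert, Finset.mem_image] at this ⊢
      grind
    · simp only [Finset.forall_mem_insert]
      refine ⟨?_, hcompl⟩
      rcases hψ with rfl | rfl
      exacts [.inl (hvv' (Finset.mem_insert_self _ _)), .inr (hvv' (Finset.mem_insert_self _ _))]

end WCons

end Formula

open Formula in
theorem right_extension_general (Φ₀ : Finset Formula)
    (hsim : SimClosed Φ₀)
    (u v : Finset Formula) (hv : v ⊆ Φ₀)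
    (w : Set Formula) (h : WCons true w u v) :
    ∃ v' : Finset Formula, v' ⊆ Φ₀ ∧ v ⊆ v' ∧
      Consistent true (↑v' : Set Formula) ∧
      (∀ φ ∈ Φ₀, φ ∈ v' ∨ simNeg φ ∈ v') ∧
      WCons true w u v' := by
  obtain ⟨v', hvv', hv'Φ₀, hcompl, hw⟩ := h.exists_complete_superset Φ₀
  refine ⟨v', fun x hx => ?_, hvv', hw.consistent, hcompl, hw⟩
  have hx' := hv'Φ₀ hx
  simp only [Finset.mem_union, Finset.mem_image] at hx'
  rcases hx' with (hx | hx) | ⟨φ, hφ, rfl⟩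
  exacts [hv hx, hx, hsim φ hφ]

open Formula in
/-- Right extension lemma: a w-consistent (in ℜ_d) pair (u,v) of subsets of a
finite, subformula- and ∼-closed set Φ₀ can be extended on the right to a
complete consistent subset v' of Φ₀ keeping (u,v') w-consistent. -/
theorem right_extension (Φ₀ : Finset Formula)
    (hsub : SubClosed Φ₀) (hsim : SimClosed Φ₀)
    (u v : Finset Formula) (hu : u ⊆ Φ₀) (hv : v ⊆ Φ₀)
    (w : Set Formula) (h : WCons true w u v) :
    ∃ v' : Finset Formula, v' ⊆ Φ₀ ∧ v ⊆ v' ∧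
      Consistent true (↑v' : Set Formula) ∧
      (∀ φ ∈ Φ₀, φ ∈ v' ∨ simNeg φ ∈ v') ∧
      WCons true w u v' :=
  right_extension_general Φ₀ hsim u v hv w h
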